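/- Let 𝕜 be a complete nontrivially normed field, let V and W be complete normed 𝕜-vector spaces (Banach spaces over 𝕜), and let u : V → W be a continuous linear map whose cokernel W / range(u) is a finite-dimensional 𝕜-vector space. Then range(u) is a closed subspace of W and u is strict: for every open subset A ⊆ V, the image u(A) is open in range(u) with the subspace topology. -/

import Mathlib

/-!
Pick an algebraic complement `q` of `range u`; it is finite-dimensional, hence complete. The map
`V × q → W, (v, s) ↦ u v + s` is a continuous linear surjection of Banach spaces, hence a quotient
map by the open mapping theorem, and the preimage of `range u` under it is the closed set `V × {0}`.
So `range u` is closed, hence a Banach space, and the open mapping theorem applied to the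
corestriction `V → range u` gives strictness.
-/

namespace ContinuousLinearMap

variable {𝕜 V W : Type*} [NontriviallyNormedField 𝕜]
  [NormedAddCommGroup V] [NormedSpace 𝕜 V] [NormedAddCommGroup W] [NormedSpace 𝕜 W]

theorem surjective_coprod_subtypeL_of_isCompl_range (u : V →L[𝕜] W) {q : Submodule 𝕜 W}
    (hq : IsCompl (LinearMap.range (u : V →ₗ[𝕜] W)) q) :
    Function.Surjective (u.coprod q.subtypeL) := by
  refine (LinearMap.range_eq_top (f := (u.coprod q.subtypeL : V × q →ₗ[𝕜] W))).mp ?_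
  rw [coe_coprod, LinearMap.range_coprod]
  simpa using hq.sup_eq_top

theorem preimage_range_coprod_subtypeL_of_isCompl_range (u : V →L[𝕜] W) {q : Submodule 𝕜 W}
    (hq : IsCompl (LinearMap.range (u : V →ₗ[𝕜] W)) q) :
    u.coprod q.subtypeL ⁻¹' Set.range u = Prod.snd ⁻¹' {0} := by
  ext ⟨v, s⟩
  simp only [Set.mem_preimage, Set.mem_range, coprod_apply, Submodule.subtypeL_apply,
    Set.mem_singleton_iff]
  constructor
  · rintro ⟨v', hv'⟩
    have hs : (s : W) ∈ LinearMap.range (u : V →ₗ[𝕜] W) :=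
      ⟨v' - v, by simp [hv']⟩
    exact Subtype.ext (Submodule.disjoint_def.mp hq.disjoint _ hs s.2)
  · rintro rfl
    exact ⟨v, by simp⟩

variable [CompleteSpace V] [CompleteSpace W]

theorem isClosed_range_of_isCompl_range (u : V →L[𝕜] W) {q : Submodule 𝕜 W} [CompleteSpace q]
    (hq : IsCompl (LinearMap.range (u : V →ₗ[𝕜] W)) q) :
    IsClosed (Set.range u) := by
  have hquot := (u.coprod q.subtypeL).isQuotientMap
    (u.surjective_coprod_subtypeL_of_isCompl_range hq)
  rw [← hquot.isClosed_preimage, u.preimage_range_coprod_subtypeL_of_isCompl_range hq]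
  exact isClosed_singleton.preimage continuous_snd

theorem isOpen_preimage_val_image_of_isClosed_range (u : V →L[𝕜] W)
    (hu : IsClosed (Set.range u)) {A : Set V} (hA : IsOpen A) :
    IsOpen (Subtype.val ⁻¹' (u '' A) : Set (LinearMap.range (u : V →ₗ[𝕜] W))) := by
  have : CompleteSpace (LinearMap.range (u : V →ₗ[𝕜] W)) := hu.completeSpace_coe
  have himage : u '' A = Subtype.val '' (u.rangeRestrict '' A) := by
    rw [Set.image_image]
    rfl
  rw [himage, Set.preimage_image_eq _ Subtype.val_injective]
  exact u.rangeRestrict.isOpenMap (LinearMap.surjective_rangeRestrict _) A hA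

end ContinuousLinearMap

/-- A continuous linear map `u : V → W` of Banach spaces over a complete nontrivially
normed field whose cokernel `W ⧸ range u` is finite-dimensional has closed range and is
strict: the image of every open subset of `V` is open in `range u` with the subspace
topology. -/
theorem isClosed_range_and_strict_of_finiteDimensional_coker
    {𝕜 V W : Type*} [NontriviallyNormedField 𝕜] [CompleteSpace 𝕜]
    [NormedAddCommGroup V] [NormedSpace 𝕜 V] [CompleteSpace V]
    [NormedAddCommGroup W] [NormedSpace 𝕜 W] [CompleteSpace W]
    (u : V →L[𝕜] W)
    (hfd : FiniteDimensional 𝕜 (W ⧸ LinearMap.range (u : V →ₗ[𝕜] W))) :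
    IsClosed (Set.range ⇑u) ∧
      ∀ A : Set V, IsOpen A →
        IsOpen ((Subtype.val ⁻¹' (⇑u '' A)) : Set (LinearMap.range (u : V →ₗ[𝕜] W))) := by
  obtain ⟨q, hq⟩ := (LinearMap.range (u : V →ₗ[𝕜] W)).exists_isCompl
  have : FiniteDimensional 𝕜 q := .equiv (Submodule.quotientEquivOfIsCompl _ q hq)
  have : CompleteSpace q := FiniteDimensional.complete 𝕜 q
  have hclosed := u.isClosed_range_of_isCompl_range hq
  exact ⟨hclosed, fun _ hA => u.isOpen_preimage_val_image_of_isClosed_range hclosed hA⟩
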